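/- arXiv:2506.01664 — 2 statements merged into one kernel-verified Lean document; each statement's English description precedes it below -/
import Mathlib

section
/- Let T0 ⊆ T0 ∪ K be a Ψ-local theory extension, K a set of clauses, and G a finite set of flat ground clauses with no nestings of extension functions. Let K0 ∪ G0 ∪ Def be obtained from K[Ψ_K(G)] ∪ G by flattening and purification (introducing fresh constants c_t with definitions c_t ≈ f(c_1,…,c_n) for extension terms). Then the following are equivalent to T0 ∪ K ∪ G ⊨ ⊥: (i) T0 ∪ K[Ψ_K(G)] ∪ G ⊨ ⊥; (ii) T0 ∪ K0 ∪ G0 ∪ Con0 ⊨ ⊥, where Con0 = { ⋀_{i=1}^n c_i ≈ d_i → c ≈ d | f(c_1,…,c_n) ≈ c and f(d_1,…,d_n) ≈ d are in Def }. -/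
/- Common framework: first-order signatures with designated sets of interpreted symbols,
uninterpreted (extension) function symbols and fresh constants, clauses, flatness/linearity,
instances, locality of theory extensions, (general) uniform interpolants, and a semantic
specification of the symbol-elimination Algorithm 1 of the paper. -/

open FirstOrder FirstOrder.Language

namespace PaperSE

variable {L : FirstOrder.Language.{0, 0}}

/-- A function symbol of `L` together with its arity. Constants are the arity-0 symbols. -/
abbrev Sym (L : FirstOrder.Language.{0, 0}) : Type := Σ n : ℕ, L.Functions n

/-- Ground terms (no variables; constants are `0`-ary function symbols of `L`). -/
abbrev GTerm (L : FirstOrder.Language.{0, 0}) : Type := L.Term Empty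

/-- A ground term viewed as a term with variables from `α`. -/
def GTerm.cast {α : Type} (t : GTerm L) : L.Term α := Term.relabel Empty.elim t

/-- The term `c()` for a constant symbol `c`. -/
def constT (c : L.Functions 0) : GTerm L := Term.func c (fun j => j.elim0)

/- ### Structures, with the interpretation passed explicitly -/

def FunM (M : Type) (S : L.Structure M) {n : ℕ} (f : L.Functions n) (x : Fin n → M) : M := by
  letI := S; exact Structure.funMap f x

def RelM (M : Type) (S : L.Structure M) {n : ℕ} (r : L.Relations n) (x : Fin n → M) : Prop := by
  letI := S; exact Structure.RelMap r x

def TVal (M : Type) (S : L.Structure M) {α : Type} (v : α → M) (t : L.Term α) : M := by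
  letI := S; exact t.realize v

/-- Value of a ground term. -/
def GVal (M : Type) (S : L.Structure M) (t : GTerm L) : M :=
  TVal M S (fun e : Empty => e.elim) t

def RealizeF (M : Type) (S : L.Structure M) {α : Type} (φ : L.Formula α) (v : α → M) : Prop := by
  letI := S; exact φ.Realize v

def RealizeSent (M : Type) (S : L.Structure M) (φ : L.Sentence) : Prop :=
  RealizeF M S φ (fun e : Empty => e.elim)

def ModelsT (M : Type) (S : L.Structure M) (T : L.Theory) : Prop :=
  ∀ φ ∈ T, RealizeSent M S φ

/- ### Symbols and ground terms occurring in terms and formulas -/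

/-- The set of subterms of a term. -/
def subterms {α : Type} : L.Term α → Set (L.Term α)
  | .var a => {Term.var a}
  | .func f ts => insert (Term.func f ts) (⋃ i, subterms (ts i))

/-- The function (and constant) symbols occurring in a term. -/
def termSyms {α : Type} : L.Term α → Set (Sym L)
  | .var _ => ∅
  | .func f ts => insert ⟨_, f⟩ (⋃ i, termSyms (ts i))

/-- The list of occurrences of variables in a term. -/
def varOccs {α : Type} : L.Term α → List α
  | .var a => [a]
  | .func _ ts => (List.finRange _).flatMap (fun i => varOccs (ts i))

/-- The list of occurrences of constant symbols in a ground term. -/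
def constOccs : GTerm L → List (L.Functions 0)
  | .var e => e.elim
  | .func (l := n) f ts =>
      if h : n = 0 then [h ▸ f]
      else (List.finRange n).flatMap (fun i => constOccs (ts i))

/-- Does the term start with a function symbol from `F`? -/
def rootIn (F : Set (Sym L)) {α : Type} : L.Term α → Prop
  | .var _ => False
  | .func f _ => (⟨_, f⟩ : Sym L) ∈ F

/-- The function (and constant) symbols occurring in a bounded formula. -/
def bfSyms {α : Type} : ∀ {n : ℕ}, L.BoundedFormula α n → Set (Sym L)
  | _, .falsum => ∅
  | _, .equal t u => termSyms t ∪ termSyms u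
  | _, .rel _ ts => ⋃ i, termSyms (ts i)
  | _, .imp f g => bfSyms f ∪ bfSyms g
  | _, .all f => bfSyms f

abbrev sentSyms (s : L.Sentence) : Set (Sym L) := bfSyms s

def theorySyms (T : L.Theory) : Set (Sym L) := ⋃ s ∈ T, sentSyms s

/-- The ground terms occurring in a bounded formula. -/
def bfGTerms {α : Type} : ∀ {n : ℕ}, L.BoundedFormula α n → Set (GTerm L)
  | _, .falsum => ∅
  | _, .equal t u => {g | GTerm.cast g ∈ subterms t ∨ GTerm.cast g ∈ subterms u}
  | _, .rel _ ts => {g | ∃ i, GTerm.cast g ∈ subterms (ts i)}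
  | _, .imp f g => bfGTerms f ∪ bfGTerms g
  | _, .all f => bfGTerms f

abbrev sentGTerms (s : L.Sentence) : Set (GTerm L) := bfGTerms s

/- ### Literals and clauses -/

/-- Literals over variables `α`. -/
inductive Lit (L : FirstOrder.Language.{0, 0}) (α : Type) : Type where
  | eq (t u : L.Term α)
  | neq (t u : L.Term α)
  | rel {n : ℕ} (R : L.Relations n) (ts : Fin n → L.Term α)
  | nrel {n : ℕ} (R : L.Relations n) (ts : Fin n → L.Term α)

namespace Lit

def terms {α : Type} : Lit L α → Set (L.Term α)
  | eq t u => {t, u}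
  | neq t u => {t, u}
  | rel _ ts => Set.range ts
  | nrel _ ts => Set.range ts

/-- An atom (positive literal). -/
def Positive {α : Type} : Lit L α → Prop
  | eq _ _ => True
  | rel _ _ => True
  | _ => False

def subst {α β : Type} (σ : α → L.Term β) : Lit L α → Lit L β
  | eq t u => eq (t.subst σ) (u.subst σ)
  | neq t u => neq (t.subst σ) (u.subst σ)
  | rel R ts => rel R (fun i => (ts i).subst σ)
  | nrel R ts => nrel R (fun i => (ts i).subst σ)

def Realize (M : Type) (S : L.Structure M) {α : Type} (v : α → M) : Lit L α → Prop
  | eq t u => TVal M S v t = TVal M S v u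
  | neq t u => TVal M S v t ≠ TVal M S v u
  | rel R ts => RelM M S R (fun i => TVal M S v (ts i))
  | nrel R ts => ¬ RelM M S R (fun i => TVal M S v (ts i))

def syms {α : Type} (l : Lit L α) : Set (Sym L) := ⋃ t ∈ l.terms, termSyms t

end Lit

/-- A (universally closed) clause: a disjunction of literals with variables `Fin nvars`,
viewed as universally quantified. -/
structure Clause (L : FirstOrder.Language.{0, 0}) : Type where
  nvars : ℕ
  lits : List (Lit L (Fin nvars))

/-- A ground clause: a disjunction of ground literals. -/
abbrev GClause (L : FirstOrder.Language.{0, 0}) : Type := List (Lit L Empty)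

def Clause.instantiate (C : Clause L) (σ : Fin C.nvars → GTerm L) : GClause L :=
  C.lits.map (Lit.subst σ)

def Clause.syms (C : Clause L) : Set (Sym L) := ⋃ l ∈ C.lits, Lit.syms l

def GClause.syms (C : GClause L) : Set (Sym L) := ⋃ l ∈ C, Lit.syms l

def GClause.gterms (C : GClause L) : Set (GTerm L) := ⋃ l ∈ C, ⋃ t ∈ Lit.terms l, subterms t

def ClausesSyms (K : Set (Clause L)) : Set (Sym L) := ⋃ C ∈ K, C.syms

def GSyms (G : Set (GClause L)) : Set (Sym L) := ⋃ C ∈ G, GClause.syms C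

def GTerms (G : Set (GClause L)) : Set (GTerm L) := ⋃ C ∈ G, GClause.gterms C

/- ### Satisfaction -/

def ClauseHolds (M : Type) (S : L.Structure M) (C : Clause L) : Prop :=
  ∀ v : Fin C.nvars → M, ∃ l ∈ C.lits, Lit.Realize M S v l

def GClauseHolds (M : Type) (S : L.Structure M) (C : GClause L) : Prop :=
  ∃ l ∈ C, Lit.Realize M S (fun e : Empty => e.elim) l

def ModelsK (M : Type) (S : L.Structure M) (K : Set (Clause L)) : Prop :=
  ∀ C ∈ K, ClauseHolds M S C

def ModelsG (M : Type) (S : L.Structure M) (G : Set (GClause L)) : Prop :=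
  ∀ C ∈ G, GClauseHolds M S C

/-- Satisfiability (in the joint signature) of base theory `T0`, clause set `K`
and ground clauses `G`. -/
def SatTKG (T0 : L.Theory) (K : Set (Clause L)) (G : Set (GClause L)) : Prop :=
  ∃ (M : Type) (_ : Nonempty M) (S : L.Structure M),
    ModelsT M S T0 ∧ ModelsK M S K ∧ ModelsG M S G

/-- `G ⊨_{T0 ∪ K} θ` for a sentence `θ`. -/
def EntailsC (T0 : L.Theory) (K : Set (Clause L)) (G : Set (GClause L)) (θ : L.Sentence) : Prop :=
  ∀ (M : Type) (S : L.Structure M), Nonempty M →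
    ModelsT M S T0 → ModelsK M S K → ModelsG M S G → RealizeSent M S θ

/-- `A ⊨_{T0 ∪ K} θ` for sentences `A`, `θ`. -/
def EntailsS (T0 : L.Theory) (K : Set (Clause L)) (A θ : L.Sentence) : Prop :=
  ∀ (M : Type) (S : L.Structure M), Nonempty M →
    ModelsT M S T0 → ModelsK M S K → RealizeSent M S A → RealizeSent M S θ

/- ### Extension ground terms and instances -/

/-- `est(K, G)`: the ground terms starting with a function symbol in `F`
occurring in `K` or in `G`. -/
def estKG (F : Set (Sym L)) (K : Set (Clause L)) (G : Set (GClause L)) : Set (GTerm L) :=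
  { t | rootIn F t ∧
      ((∃ C ∈ K, ∃ l ∈ C.lits, ∃ s ∈ Lit.terms l, GTerm.cast t ∈ subterms s) ∨
       (∃ C ∈ G, t ∈ GClause.gterms C)) }

/-- `K[Tt]`: the set of ground instances of clauses of `K` all of whose terms starting
with a function symbol in `F` belong to `Tt`. -/
def instancesIn (F : Set (Sym L)) (K : Set (Clause L)) (Tt : Set (GTerm L)) :
    Set (GClause L) :=
  { D | ∃ C ∈ K, ∃ σ : Fin C.nvars → GTerm L, D = C.instantiate σ ∧
      ∀ t ∈ GClause.gterms (C.instantiate σ), rootIn F t → t ∈ Tt }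

/- ### Locality -/

/-- Locality of the extension of the theory `T0` together with base clauses `K0`
by the clauses `K`, with extension symbols `F`. -/
def LocalExt2 (F : Set (Sym L)) (T0 : L.Theory) (K0 K : Set (Clause L)) : Prop :=
  ∀ G : Set (GClause L), G.Finite →
    ((¬ ∃ (M : Type) (_ : Nonempty M) (S : L.Structure M),
        ModelsT M S T0 ∧ ModelsK M S K0 ∧ ModelsK M S K ∧ ModelsG M S G) ↔
     (¬ ∃ (M : Type) (_ : Nonempty M) (S : L.Structure M),
        ModelsT M S T0 ∧ ModelsK M S K0 ∧
          ModelsG M S (instancesIn F K (estKG F K G) ∪ G)))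

/-- Locality of the theory extension `T0 ⊆ T0 ∪ K` with extension symbols `F`. -/
abbrev LocalExt (F : Set (Sym L)) (T0 : L.Theory) (K : Set (Clause L)) : Prop :=
  LocalExt2 F T0 ∅ K

/-- `Ψ`-locality of the theory extension `T0 ⊆ T0 ∪ K` with extension symbols `F`. -/
def PsiLocalExt (F : Set (Sym L)) (T0 : L.Theory) (K : Set (Clause L))
    (Ψ : Set (GTerm L) → Set (GTerm L)) : Prop :=
  ∀ G : Set (GClause L), G.Finite →
    (¬ SatTKG T0 K G ↔ ¬ SatTKG T0 ∅ (instancesIn F K (Ψ (estKG F K G)) ∪ G))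

/- ### Flatness and linearity -/

/-- All symbols occurring directly below a function symbol from `F` are variables. -/
def flatTerm (F : Set (Sym L)) {α : Type} : L.Term α → Prop
  | .var _ => True
  | .func f ts =>
      ((⟨_, f⟩ : Sym L) ∈ F → ∀ i, ∃ a, ts i = Term.var a) ∧ ∀ i, flatTerm F (ts i)

/-- All symbols occurring directly below a function symbol from `F` are constants. -/
def flatGTerm (F : Set (Sym L)) : GTerm L → Prop
  | .var e => e.elim
  | .func f ts =>
      ((⟨_, f⟩ : Sym L) ∈ F → ∀ i, ∃ c : L.Functions 0, ts i = constT c) ∧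
        ∀ i, flatGTerm F (ts i)

def Clause.extTerms (F : Set (Sym L)) (C : Clause L) : Set (L.Term (Fin C.nvars)) :=
  { t | rootIn F t ∧ ∃ l ∈ C.lits, ∃ s ∈ Lit.terms l, t ∈ subterms s }

def Clause.Flat (F : Set (Sym L)) (C : Clause L) : Prop :=
  ∀ l ∈ C.lits, ∀ t ∈ Lit.terms l, flatTerm F t

def Clause.Linear (F : Set (Sym L)) (C : Clause L) : Prop :=
  (∀ t ∈ C.extTerms F, ∀ u ∈ C.extTerms F,
      (∃ x, x ∈ varOccs t ∧ x ∈ varOccs u) → t = u) ∧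
  (∀ t ∈ C.extTerms F, (varOccs t).Nodup)

/-- Every variable occurring in the clause occurs below a function symbol from `F`. -/
def Clause.VarsBelowExt (F : Set (Sym L)) (C : Clause L) : Prop :=
  ∀ x : Fin C.nvars, (∃ l ∈ C.lits, ∃ s ∈ Lit.terms l, x ∈ varOccs s) →
    ∃ t ∈ C.extTerms F, x ∈ varOccs t

def GClause.extTerms (F : Set (Sym L)) (C : GClause L) : Set (GTerm L) :=
  { t | rootIn F t ∧ t ∈ GClause.gterms C }

def GClause.Flat (F : Set (Sym L)) (C : GClause L) : Prop :=
  ∀ l ∈ C, ∀ t ∈ Lit.terms l, flatGTerm F t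

def GClause.Linear (F : Set (Sym L)) (C : GClause L) : Prop :=
  (∀ t ∈ GClause.extTerms F C, ∀ u ∈ GClause.extTerms F C,
      (∃ c, c ∈ constOccs t ∧ c ∈ constOccs u) → t = u) ∧
  (∀ t ∈ GClause.extTerms F C, (constOccs t).Nodup)

/- ### Agreement of structures and (reduct-)embeddings -/

/-- The two interpretations agree on all relation symbols and on the function symbols in `F`. -/
def AgreeOn (M : Type) (S1 S2 : L.Structure M) (F : Set (Sym L)) : Prop :=
  (∀ (n : ℕ) (f : L.Functions n), (⟨n, f⟩ : Sym L) ∈ F →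
      ∀ x : Fin n → M, FunM M S1 f x = FunM M S2 f x) ∧
  (∀ (n : ℕ) (r : L.Relations n) (x : Fin n → M), RelM M S1 r x ↔ RelM M S2 r x)

/-- An embedding of the reducts to the subsignature consisting of all predicate symbols and
the function symbols in `F`: an injective map preserving and reflecting all predicates and
preserving the functions in `F`. -/
structure SubEmb (L : FirstOrder.Language.{0, 0}) (F : Set (Sym L)) (M N : Type)
    (SM : L.Structure M) (SN : L.Structure N) : Type where
  toFun : M → N
  inj : Function.Injective toFun
  map_fun : ∀ (n : ℕ) (f : L.Functions n), (⟨n, f⟩ : Sym L) ∈ F →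
      ∀ x : Fin n → M, toFun (FunM M SM f x) = FunM N SN f (toFun ∘ x)
  map_rel : ∀ (n : ℕ) (r : L.Relations n) (x : Fin n → M),
      RelM M SM r x ↔ RelM N SN r (toFun ∘ x)

/- ### Quantifier elimination and related properties of the base theory -/

/-- `T0` allows quantifier elimination (for formulas over the symbols in `F0`). -/
def HasQE (T0 : L.Theory) (F0 : Set (Sym L)) : Prop :=
  ∀ (m : ℕ) (φ : L.Formula (Fin m)), bfSyms φ ⊆ F0 →
    ∃ ψ : L.Formula (Fin m), ψ.IsQF ∧ bfSyms ψ ⊆ F0 ∧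
      ∀ (M : Type) (S : L.Structure M), Nonempty M → ModelsT M S T0 →
        ∀ v : Fin m → M, (RealizeF M S φ v ↔ RealizeF M S ψ v)

def ModelsLits (M : Type) (S : L.Structure M) (A : List (Lit L Empty)) : Prop :=
  ∀ l ∈ A, Lit.Realize M S (fun e : Empty => e.elim) l

def litListSyms (A : List (Lit L Empty)) : Set (Sym L) := ⋃ l ∈ A, Lit.syms l

/-- Convexity of a theory (with clause axioms `K`). -/
def Convex (T0 : L.Theory) (K : Set (Clause L)) : Prop :=
  ∀ Γ : List (Lit L Empty), (∀ l ∈ Γ, l.Positive) →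
  ∀ (m : ℕ) (s t : Fin (m + 1) → GTerm L),
    (∀ (M : Type) (S : L.Structure M), Nonempty M → ModelsT M S T0 → ModelsK M S K →
        ModelsLits M S Γ → ∃ i, GVal M S (s i) = GVal M S (t i)) →
    ∃ i0, ∀ (M : Type) (S : L.Structure M), Nonempty M → ModelsT M S T0 → ModelsK M S K →
        ModelsLits M S Γ → GVal M S (s i0) = GVal M S (t i0)

/-- Stable infiniteness. -/
def StablyInfinite (T0 : L.Theory) (K : Set (Clause L)) : Prop :=
  ∀ φ : L.Sentence, φ.IsQF →
    (∃ (M : Type) (_ : Nonempty M) (S : L.Structure M),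
        ModelsT M S T0 ∧ ModelsK M S K ∧ RealizeSent M S φ) →
    ∃ (M : Type) (_ : Infinite M) (S : L.Structure M),
        ModelsT M S T0 ∧ ModelsK M S K ∧ RealizeSent M S φ

/-- Equality interpolation (for a convex theory with interpreted symbols `F0`). -/
def EqInterpolating (T0 : L.Theory) (F0 : Set (Sym L)) : Prop :=
  ∀ (A B : List (Lit L Empty)) (a b : L.Functions 0),
    (⟨0, a⟩ : Sym L) ∉ litListSyms B → (⟨0, b⟩ : Sym L) ∉ litListSyms A →
    (∀ (M : Type) (S : L.Structure M), Nonempty M → ModelsT M S T0 → ModelsLits M S A →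
        ModelsLits M S B → GVal M S (constT a) = GVal M S (constT b)) →
    ∃ t : GTerm L, termSyms t ⊆ F0 ∪ (litListSyms A ∩ litListSyms B) ∧
      ∀ (M : Type) (S : L.Structure M), Nonempty M → ModelsT M S T0 → ModelsLits M S A →
        ModelsLits M S B →
          GVal M S (constT a) = GVal M S t ∧ GVal M S t = GVal M S (constT b)

/-- A universal sentence. -/
def IsUniversalSent (s : L.Sentence) : Prop :=
  ∃ (m : ℕ) (ψ : L.BoundedFormula Empty m), ψ.IsQF ∧ s = ψ.alls

def IsUniversalTheory (T : L.Theory) : Prop := ∀ s ∈ T, IsUniversalSent s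

/-- Close the outermost `k` bound variables existentially. -/
def exsTo {m : ℕ} : ∀ {k : ℕ}, L.BoundedFormula Empty (m + k) → L.BoundedFormula Empty m
  | 0, φ => φ
  | _ + 1, φ => exsTo φ.ex

/-- A `∀∃`-sentence. -/
def IsAESent (s : L.Sentence) : Prop :=
  ∃ (m k : ℕ) (ψ : L.BoundedFormula Empty (m + k)), ψ.IsQF ∧ s = (exsTo ψ).alls

def IsAETheory (T : L.Theory) : Prop := ∀ s ∈ T, IsAESent s

/- ### General uniform interpolants and uniform interpolants (covers) -/

/-- `ψ` is a general uniform interpolant of the ground clause set `G` w.r.t. the theory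
`T0 ∪ K` and the symbols in `Keep` (which contains all interpreted symbols, the shared
uninterpreted symbols and the shared constants). -/
def IsGUIg (T0 : L.Theory) (K : Set (Clause L)) (G : Set (GClause L))
    (Keep : Set (Sym L)) (ψ : L.Sentence) : Prop :=
  ψ.IsQF ∧ sentSyms ψ ⊆ Keep ∧ EntailsC T0 K G ψ ∧
  ∀ θ : L.Sentence, θ.IsQF → sentSyms θ ∩ GSyms G ⊆ Keep →
    EntailsC T0 K G θ → EntailsS T0 K ψ θ

/-- `ψ` is a general uniform interpolant of the ground formula `φ` w.r.t. the theory
`T0 ∪ K` and the symbols in `Keep`. -/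
def IsGUIs (T0 : L.Theory) (K : Set (Clause L)) (φ : L.Sentence)
    (Keep : Set (Sym L)) (ψ : L.Sentence) : Prop :=
  ψ.IsQF ∧ sentSyms ψ ⊆ Keep ∧ EntailsS T0 K φ ψ ∧
  ∀ θ : L.Sentence, θ.IsQF → sentSyms θ ∩ sentSyms φ ⊆ Keep →
    EntailsS T0 K φ θ → EntailsS T0 K ψ θ

/-- `ψ` is a uniform interpolant (cover) of `Γ` w.r.t. the theory `T0 ∪ K`, the set `CC`
of (eliminable) constants and the kept constants `Cs ⊆ CC`; all other symbols are treated
as interpreted. -/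
def IsUI (T0 : L.Theory) (K : Set (Clause L)) (CC Cs : Set (Sym L)) (Γ ψ : L.Sentence) : Prop :=
  ψ.IsQF ∧ sentSyms ψ ∩ CC ⊆ Cs ∧ EntailsS T0 K Γ ψ ∧
  ∀ θ : L.Sentence, θ.IsQF → sentSyms θ ∩ sentSyms Γ ∩ CC ⊆ Cs →
    EntailsS T0 K Γ θ → EntailsS T0 K ψ θ

/- ### The semantic specification of Algorithm 1 -/

/-- The constants occurring in some term of `S` as an argument of a function symbol in `Sigs`. -/
def argConstsOf (Sigs : Set (Sym L)) (S : Set (GTerm L)) : Set (Sym L) :=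
  { p | ∃ c : L.Functions 0, p = ⟨0, c⟩ ∧
      ∃ t ∈ S, ∃ (n : ℕ) (f : L.Functions n) (ts : Fin n → GTerm L),
        t = Term.func f ts ∧ (⟨n, f⟩ : Sym L) ∈ Sigs ∧ ∃ i, ts i = constT c }

/-- Semantic specification of the output `Γ` of Algorithm 1, applied to the theory extension
`T0 ∪ K` (extension symbols `F`), the ground clauses `G` and the instantiation terms `Tt`,
keeping exactly the symbols in `Keep` (all interpreted symbols, the parameters `Sigs` and the
non-eliminated constants):  `Γ` is a ground formula over `Keep` which, on each model of `T0`,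
expresses the existence of values for the eliminated constants and for the purified names of
the extension terms (equivalently, of a reinterpretation of the eliminated symbols) satisfying
`K[Tt] ∪ G`. -/
def AlgOneOutput (F : Set (Sym L)) (T0 : L.Theory) (K : Set (Clause L)) (G : Set (GClause L))
    (Tt : Set (GTerm L)) (Keep : Set (Sym L)) (Γ : L.Sentence) : Prop :=
  Γ.IsQF ∧ sentSyms Γ ⊆ Keep ∧
  ∀ (M : Type) (S : L.Structure M), Nonempty M → ModelsT M S T0 →
    (RealizeSent M S Γ ↔
      ∃ S' : L.Structure M, AgreeOn M S S' Keep ∧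
        ModelsG M S' (instancesIn F K Tt) ∧ ModelsG M S' G)

/- ### Implicit definability -/

/-- `f` is implicitly definable w.r.t. `T0 ∪ K` over the symbols in `Pi1`:
any two interpretations (on the same universe) which agree on `Pi1` and are both models
of `T0 ∪ K` interpret `f` in the same way.  (This is the standard semantic rendering of
the definition via renaming the symbols outside `Pi1` to primed copies.) -/
def ImplicitlyDefinable (T0 : L.Theory) (K : Set (Clause L)) (Pi1 : Set (Sym L))
    {n : ℕ} (f : L.Functions n) : Prop :=
  ∀ (M : Type), Nonempty M → ∀ S1 S2 : L.Structure M,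
    AgreeOn M S1 S2 Pi1 →
    ModelsT M S1 T0 → ModelsK M S1 K → ModelsT M S2 T0 → ModelsK M S2 K →
    ∀ x : Fin n → M, FunM M S1 f x = FunM M S2 f x

end PaperSE

namespace PaperSE

open Classical in
/-- Evaluation of ground terms in which terms rooted in an extension symbol (from `F`) are
evaluated by the valuation `w` of the purification constants naming them, and all other
symbols are evaluated in the structure `S` ("purified" evaluation). -/
noncomputable def mixedEval {L : FirstOrder.Language.{0, 0}} (F : Set (Sym L)) (M : Type)
    (S : L.Structure M) (w : GTerm L → M) : GTerm L → M
  | .var e => e.elim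
  | .func f ts =>
      if (⟨_, f⟩ : Sym L) ∈ F then w (Term.func f ts)
      else FunM M S f (fun i => mixedEval F M S w (ts i))

/-- Realization of a ground literal w.r.t. an arbitrary evaluation of ground terms. -/
def LitRealizeEv {L : FirstOrder.Language.{0, 0}} (M : Type) (S : L.Structure M)
    (ev : GTerm L → M) : Lit L Empty → Prop
  | .eq t u => ev t = ev u
  | .neq t u => ev t ≠ ev u
  | .rel R ts => RelM M S R (fun i => ev (ts i))
  | .nrel R ts => ¬ RelM M S R (fun i => ev (ts i))

def GClauseHoldsEv {L : FirstOrder.Language.{0, 0}} (M : Type) (S : L.Structure M)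
    (ev : GTerm L → M) (C : GClause L) : Prop :=
  ∃ l ∈ C, LitRealizeEv M S ev l

/-- No extension symbol occurs strictly below an extension symbol. -/
def NoNest {L : FirstOrder.Language.{0, 0}} (F : Set (Sym L)) (G : Set (GClause L)) : Prop :=
  ∀ t ∈ GTerms G, rootIn F t →
    ∀ (n : ℕ) (f : L.Functions n) (ts : Fin n → GTerm L), t = Term.func f ts →
      ∀ i, ∀ s ∈ subterms (ts i), ¬ rootIn F s

/-!
Part (i) is `Ψ`-locality itself. For (ii), a model of `T0 ∪ K[Ψ_K(G)] ∪ G` solves the purified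
problem when every extension term is named by its value. Conversely, from a `T0`-model `S` and names
`w` satisfying `Con0`, interpret each extension symbol `f` at the purified value of the arguments of
a named term `f(ts)` as `w (f(ts))`, which `Con0` makes well defined, and as in `S` elsewhere. The
base symbols are untouched, so `T0` still holds, and each ground term of the problem now evaluates
to its purified value.
-/

section Purification

variable {L : FirstOrder.Language.{0, 0}}

theorem mem_subterms_self {α : Type} (t : L.Term α) : t ∈ subterms t := by
  cases t <;> simp [subterms]

theorem mem_subterms_func_of_mem_arg {α : Type} {n : ℕ} {f : L.Functions n}
    {ts : Fin n → L.Term α} {s : L.Term α} (i : Fin n) (hs : s ∈ subterms (ts i)) :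
    s ∈ subterms (Term.func f ts) := by
  simp only [subterms, Set.mem_insert_iff, Set.mem_iUnion]
  exact Or.inr ⟨i, hs⟩

theorem AgreeOn.mono {M : Type} {S1 S2 : L.Structure M} {F F' : Set (Sym L)}
    (h : AgreeOn M S1 S2 F) (hF' : F' ⊆ F) : AgreeOn M S1 S2 F' :=
  ⟨fun n f hf => h.1 n f (hF' hf), h.2⟩

theorem TVal_congr_structure {M : Type} {S1 S2 : L.Structure M} {α : Type} (v : α → M)
    (t : L.Term α)
    (h : ∀ (n : ℕ) (f : L.Functions n), (⟨n, f⟩ : Sym L) ∈ termSyms t →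
      ∀ x : Fin n → M, FunM M S1 f x = FunM M S2 f x) :
    TVal M S1 v t = TVal M S2 v t := by
  induction t with
  | var a => rfl
  | func f ts ih =>
      have hargs : (fun i => TVal M S1 v (ts i)) = fun i => TVal M S2 v (ts i) :=
        funext fun i => ih i fun n g hg => h n g (by
          simp only [termSyms, Set.mem_insert_iff, Set.mem_iUnion]
          exact Or.inr ⟨i, hg⟩)
      change FunM M S1 f (fun i => TVal M S1 v (ts i)) = FunM M S2 f (fun i => TVal M S2 v (ts i))
      rw [hargs]
      exact h _ f (by simp [termSyms]) _

def BRealize (M : Type) (S : L.Structure M) {α : Type} {n : ℕ}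
    (φ : L.BoundedFormula α n) (v : α → M) (xs : Fin n → M) : Prop := by
  letI := S; exact φ.Realize v xs

theorem BRealize_congr_structure {M : Type} {S1 S2 : L.Structure M} {α : Type} (v : α → M)
    {n : ℕ} (φ : L.BoundedFormula α n) (h : AgreeOn M S1 S2 (bfSyms φ)) (xs : Fin n → M) :
    BRealize M S1 φ v xs ↔ BRealize M S2 φ v xs := by
  induction φ with
  | falsum => exact Iff.rfl
  | equal t u =>
      change TVal M S1 _ t = TVal M S1 _ u ↔ TVal M S2 _ t = TVal M S2 _ u
      rw [TVal_congr_structure _ t fun n f hf => h.1 n f (Or.inl hf),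
        TVal_congr_structure _ u fun n f hf => h.1 n f (Or.inr hf)]
  | rel R ts =>
      change RelM M S1 R (fun i => TVal M S1 _ (ts i)) ↔ RelM M S2 R (fun i => TVal M S2 _ (ts i))
      have hargs : (fun i => TVal M S1 (Sum.elim v xs) (ts i)) =
          fun i => TVal M S2 (Sum.elim v xs) (ts i) :=
        funext fun i => TVal_congr_structure _ (ts i) fun n f hf =>
          h.1 n f (Set.mem_iUnion.mpr ⟨i, hf⟩)
      rw [hargs]
      exact h.2 _ R _
  | imp φ ψ ihφ ihψ =>
      exact imp_congr (ihφ (h.mono Set.subset_union_left) xs)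
        (ihψ (h.mono Set.subset_union_right) xs)
  | all φ ih =>
      exact forall_congr' fun x => ih h _

theorem ModelsT_congr_structure {M : Type} {S1 S2 : L.Structure M} {T : L.Theory}
    (h : AgreeOn M S1 S2 (theorySyms T)) : ModelsT M S1 T ↔ ModelsT M S2 T :=
  forall₂_congr fun φ hφ => BRealize_congr_structure _ φ
    (h.mono (Set.subset_biUnion_of_mem (u := sentSyms) hφ)) _

theorem Lit.realize_iff_litRealizeEv {M : Type} {S : L.Structure M} {ev : GTerm L → M}
    {l : Lit L Empty} (h : ∀ t ∈ l.terms, GVal M S t = ev t) :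
    Lit.Realize M S (fun e : Empty => e.elim) l ↔ LitRealizeEv M S ev l := by
  have hargs {n : ℕ} (ts : Fin n → GTerm L) (hts : Set.range ts ⊆ l.terms) :
      (fun i => GVal M S (ts i)) = fun i => ev (ts i) :=
    funext fun i => h _ (hts ⟨i, rfl⟩)
  cases l with
  | eq t u =>
      change GVal M S t = GVal M S u ↔ ev t = ev u
      rw [h t (by simp [Lit.terms]), h u (by simp [Lit.terms])]
  | neq t u =>
      change GVal M S t ≠ GVal M S u ↔ ev t ≠ ev u
      rw [h t (by simp [Lit.terms]), h u (by simp [Lit.terms])]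
  | rel R ts => exact Iff.of_eq (congrArg (RelM M S R) (hargs ts le_rfl))
  | nrel R ts => exact Iff.of_eq (congrArg (fun x => ¬ RelM M S R x) (hargs ts le_rfl))

theorem GClauseHolds_iff_GClauseHoldsEv {M : Type} {S : L.Structure M} {ev : GTerm L → M}
    {C : GClause L} (h : ∀ l ∈ C, ∀ t ∈ l.terms, GVal M S t = ev t) :
    GClauseHolds M S C ↔ GClauseHoldsEv M S ev C :=
  exists_congr fun l => and_congr_right fun hl => Lit.realize_iff_litRealizeEv (h l hl)

theorem mixedEval_func {F : Set (Sym L)} {M : Type} {S : L.Structure M} {w : GTerm L → M}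
    {n : ℕ} (f : L.Functions n) (ts : Fin n → GTerm L) [Decidable ((⟨n, f⟩ : Sym L) ∈ F)] :
    mixedEval F M S w (Term.func f ts) =
      if (⟨n, f⟩ : Sym L) ∈ F then w (Term.func f ts)
      else FunM M S f (fun i => mixedEval F M S w (ts i)) := by
  rw [mixedEval]
  congr

theorem mixedEval_GVal (F : Set (Sym L)) {M : Type} (S : L.Structure M) :
    mixedEval F M S (GVal M S) = GVal M S := by
  funext t
  induction t with
  | var e => exact e.elim
  | func f ts ih =>
      classical
      rw [mixedEval_func]
      split_ifs
      · rfl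
      · exact congrArg (FunM M S f) (funext ih)

/-- The congruence axioms `Con0` for the names `w` of the extension terms in `E`. -/
def CongruenceOn (F : Set (Sym L)) (E : Set (GTerm L)) (M : Type) (S : L.Structure M)
    (w : GTerm L → M) : Prop :=
  ∀ (n : ℕ) (f : L.Functions n) (ts us : Fin n → GTerm L),
    (⟨n, f⟩ : Sym L) ∈ F → Term.func f ts ∈ E → Term.func f us ∈ E →
    (∀ i, mixedEval F M S w (ts i) = mixedEval F M S w (us i)) →
    w (Term.func f ts) = w (Term.func f us)

/-- Satisfiability of the purified problem `T0 ∪ G0 ∪ Con0`. -/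
def PurifiedSat (F : Set (Sym L)) (T0 : L.Theory) (G : Set (GClause L)) : Prop :=
  ∃ (M : Type) (_ : Nonempty M) (S : L.Structure M) (w : GTerm L → M),
    ModelsT M S T0 ∧ CongruenceOn F (estKG F ∅ G) M S w ∧
    ∀ C ∈ G, GClauseHoldsEv M S (mixedEval F M S w) C

theorem congruenceOn_GVal (F : Set (Sym L)) (E : Set (GTerm L)) {M : Type}
    (S : L.Structure M) : CongruenceOn F E M S (GVal M S) := by
  intro n f ts us _ _ _ h
  rw [mixedEval_GVal] at h
  exact congrArg (FunM M S f) (funext h)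

theorem purifiedSat_of_satTKG {F : Set (Sym L)} {T0 : L.Theory} {K : Set (Clause L)}
    {G : Set (GClause L)} (h : SatTKG T0 K G) : PurifiedSat F T0 G := by
  obtain ⟨M, hM, S, hT0, -, hG⟩ := h
  refine ⟨M, hM, S, GVal M S, hT0, congruenceOn_GVal F _ S, fun C hC => ?_⟩
  rw [mixedEval_GVal]
  exact (GClauseHolds_iff_GClauseHoldsEv fun _ _ _ _ => rfl).mp (hG C hC)

section PurifiedStructure

variable (F : Set (Sym L)) (E : Set (GTerm L)) {M : Type} (S : L.Structure M) (w : GTerm L → M)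

@[reducible] noncomputable def purifiedStructure : L.Structure M where
  funMap {n} f x := by
    classical
    exact if h : (⟨n, f⟩ : Sym L) ∈ F ∧ ∃ ts : Fin n → GTerm L,
        Term.func f ts ∈ E ∧ (fun i => mixedEval F M S w (ts i)) = x
      then w (Term.func f h.2.choose) else FunM M S f x
  RelMap r x := RelM M S r x

theorem FunM_purifiedStructure_of_notMem {n : ℕ} {f : L.Functions n}
    (hf : (⟨n, f⟩ : Sym L) ∉ F) (x : Fin n → M) :
    FunM M (purifiedStructure F E S w) f x = FunM M S f x :=
  dif_neg fun h => hf h.1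

theorem FunM_purifiedStructure_of_mem (hcong : CongruenceOn F E M S w) {n : ℕ}
    {f : L.Functions n} {ts : Fin n → GTerm L} (hf : (⟨n, f⟩ : Sym L) ∈ F)
    (hts : Term.func f ts ∈ E) :
    FunM M (purifiedStructure F E S w) f (fun i => mixedEval F M S w (ts i)) =
      w (Term.func f ts) := by
  have hnamed : (⟨n, f⟩ : Sym L) ∈ F ∧ ∃ us : Fin n → GTerm L,
      Term.func f us ∈ E ∧ (fun i => mixedEval F M S w (us i)) = fun i => mixedEval F M S w (ts i) :=
    ⟨hf, ts, hts, rfl⟩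
  refine (dif_pos hnamed).trans ?_
  obtain ⟨hus, hval⟩ := hnamed.2.choose_spec
  exact hcong n f _ ts hf hus hts (congrFun hval)

theorem GVal_purifiedStructure (hcong : CongruenceOn F E M S w) (t : GTerm L)
    (hE : ∀ s ∈ subterms t, rootIn F s → s ∈ E) :
    GVal M (purifiedStructure F E S w) t = mixedEval F M S w t := by
  induction t with
  | var e => exact e.elim
  | func f ts ih =>
      classical
      have hargs : (fun i => GVal M (purifiedStructure F E S w) (ts i)) =
          fun i => mixedEval F M S w (ts i) :=
        funext fun i => ih i fun s hs => hE s (mem_subterms_func_of_mem_arg i hs)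
      change FunM M (purifiedStructure F E S w) f
        (fun i => GVal M (purifiedStructure F E S w) (ts i)) = _
      rw [hargs, mixedEval_func]
      split_ifs with hf
      · exact FunM_purifiedStructure_of_mem F E S w hcong hf (hE _ (mem_subterms_self _) hf)
      · exact FunM_purifiedStructure_of_notMem F E S w hf _

theorem agreeOn_purifiedStructure {F' : Set (Sym L)} (hF' : Disjoint F' F) :
    AgreeOn M (purifiedStructure F E S w) S F' :=
  ⟨fun _ _ hf => FunM_purifiedStructure_of_notMem F E S w (Set.disjoint_left.mp hF' hf),
    fun _ _ _ => Iff.rfl⟩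

end PurifiedStructure

theorem satTKG_empty_of_purifiedSat {F : Set (Sym L)} {T0 : L.Theory}
    (hT0 : Disjoint (theorySyms T0) F) {G : Set (GClause L)} (h : PurifiedSat F T0 G) :
    SatTKG T0 ∅ G := by
  obtain ⟨M, hM, S, w, hT0S, hcong, hG⟩ := h
  refine ⟨M, hM, purifiedStructure F (estKG F ∅ G) S w,
    (ModelsT_congr_structure (agreeOn_purifiedStructure F _ S w hT0)).mpr hT0S,
    fun C hC => absurd hC (Set.notMem_empty C), fun C hC => ?_⟩
  refine (GClauseHolds_iff_GClauseHoldsEv fun l hl t ht => ?_).mpr (hG C hC)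
  refine GVal_purifiedStructure F _ S w hcong t fun s hs hroot => ⟨hroot, Or.inr ⟨C, hC, ?_⟩⟩
  simp only [GClause.gterms, Set.mem_iUnion]
  exact ⟨l, hl, t, ht, hs⟩

theorem satTKG_empty_iff_purifiedSat {F : Set (Sym L)} {T0 : L.Theory}
    (hT0 : Disjoint (theorySyms T0) F) (G : Set (GClause L)) :
    SatTKG T0 ∅ G ↔ PurifiedSat F T0 G :=
  ⟨purifiedSat_of_satTKG, satTKG_empty_of_purifiedSat hT0⟩

end Purification

theorem hierarchical_reasoning_general
    (L : FirstOrder.Language.{0, 0})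
    (F0 FS : Set (Sym L))
    (hd01 : Disjoint F0 FS)
    (T0 : L.Theory) (hT0 : theorySyms T0 ⊆ F0)
    (K : Set (Clause L))
    (Ψ : Set (GTerm L) → Set (GTerm L))
    (hloc : PsiLocalExt FS T0 K Ψ)
    (G : Set (GClause L)) (hGfin : G.Finite) :
    -- the set `E` of extension ground terms occurring in `K[Ψ_K(G)] ∪ G`
    -- (named by fresh constants in the purification step) :
    (¬ SatTKG T0 K G ↔
      ¬ SatTKG T0 ∅ (instancesIn FS K (Ψ (estKG FS K G)) ∪ G)) ∧
    (¬ SatTKG T0 K G ↔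
      ¬ ∃ (M : Type) (_ : Nonempty M) (S : L.Structure M) (w : GTerm L → M),
          ModelsT M S T0 ∧
          -- the congruence axioms `Con0` :
          (∀ (n : ℕ) (f : L.Functions n) (ts us : Fin n → GTerm L),
            (⟨n, f⟩ : Sym L) ∈ FS →
            Term.func f ts ∈ estKG FS ∅ (instancesIn FS K (Ψ (estKG FS K G)) ∪ G) →
            Term.func f us ∈ estKG FS ∅ (instancesIn FS K (Ψ (estKG FS K G)) ∪ G) →
            (∀ i, mixedEval FS M S w (ts i) = mixedEval FS M S w (us i)) →
            w (Term.func f ts) = w (Term.func f us)) ∧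
          -- `K0 ∪ G0` : the purified instances and goal :
          (∀ C ∈ instancesIn FS K (Ψ (estKG FS K G)) ∪ G,
            GClauseHoldsEv M S (mixedEval FS M S w) C)) := by
  have hlocal := hloc G hGfin
  refine ⟨hlocal, hlocal.trans (not_congr ?_)⟩
  exact satTKG_empty_iff_purifiedSat (hd01.mono_left hT0) _

/-- Theorem `lemma-rel-transl`, hierarchical reasoning.  Let
`T0 ⊆ T0 ∪ K` be a `Ψ`-local theory extension and `G` a finite set of flat ground clauses
with no nestings of extension functions.  Then `T0 ∪ K ∪ G ⊨ ⊥` is equivalent to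
(i) `T0 ∪ K[Ψ_K(G)] ∪ G ⊨ ⊥` and to (ii) the unsatisfiability of the flattened and purified
problem `T0 ∪ K0 ∪ G0 ∪ Con0`, rendered semantically: there are no `T0`-model `M` and values
`w` for the purification constants (names of the extension ground terms `E` of
`K[Ψ_K(G)] ∪ G`) satisfying the congruence axioms `Con0` and making `K[Ψ_K(G)] ∪ G` true
under the purified evaluation. -/
theorem hierarchical_reasoning
    (L : FirstOrder.Language.{0, 0})
    (F0 FS CC : Set (Sym L))
    (hd01 : Disjoint F0 FS) (hd02 : Disjoint F0 CC) (hd12 : Disjoint FS CC)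
    (hcover : F0 ∪ FS ∪ CC = Set.univ)
    (hCC0 : ∀ p ∈ CC, p.1 = 0)
    (T0 : L.Theory) (hT0 : theorySyms T0 ⊆ F0)
    (K : Set (Clause L)) (hKsyms : ClausesSyms K ⊆ F0 ∪ FS)
    (Ψ : Set (GTerm L) → Set (GTerm L))
    (hΨext : ∀ Tset : Set (GTerm L), Tset ⊆ Ψ Tset)
    (hΨfin : ∀ Tset : Set (GTerm L), Tset.Finite → (Ψ Tset).Finite)
    (hloc : PsiLocalExt FS T0 K Ψ)
    (G : Set (GClause L)) (hGfin : G.Finite)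
    (hGflat : ∀ C ∈ G, GClause.Flat FS C)
    (hGnonest : NoNest FS G) :
    -- the set `E` of extension ground terms occurring in `K[Ψ_K(G)] ∪ G`
    -- (named by fresh constants in the purification step) :
    (¬ SatTKG T0 K G ↔
      ¬ SatTKG T0 ∅ (instancesIn FS K (Ψ (estKG FS K G)) ∪ G)) ∧
    (¬ SatTKG T0 K G ↔
      ¬ ∃ (M : Type) (_ : Nonempty M) (S : L.Structure M) (w : GTerm L → M),
          ModelsT M S T0 ∧
          -- the congruence axioms `Con0` :
          (∀ (n : ℕ) (f : L.Functions n) (ts us : Fin n → GTerm L),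
            (⟨n, f⟩ : Sym L) ∈ FS →
            Term.func f ts ∈ estKG FS ∅ (instancesIn FS K (Ψ (estKG FS K G)) ∪ G) →
            Term.func f us ∈ estKG FS ∅ (instancesIn FS K (Ψ (estKG FS K G)) ∪ G) →
            (∀ i, mixedEval FS M S w (ts i) = mixedEval FS M S w (us i)) →
            w (Term.func f ts) = w (Term.func f us)) ∧
          -- `K0 ∪ G0` : the purified instances and goal :
          (∀ C ∈ instancesIn FS K (Ψ (estKG FS K G)) ∪ G,
            GClauseHoldsEv M S (mixedEval FS M S w) C)) :=
  hierarchical_reasoning_general L F0 FS hd01 T0 hT0 K Ψ hloc G hGfin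

end PaperSE
end

section
/- Let T be a theory and ∃ē φ(ē, ȳ) an existential formula with free variables ȳ. A quantifier-free formula ψ(ȳ) is a T-cover (T-uniform interpolant) of ∃ē φ(ē, ȳ) if and only if: (1) T ⊨ φ(ē, ȳ) → ψ(ȳ), and (2') for every model A of T and every tuple ā of elements of A with A ⊨ ψ(ā), there exists another model B of T such that A embeds into B and B ⊨ ∃ē φ(ē, ā). -/
/- Common framework: first-order signatures with designated sets of interpreted symbols,
uninterpreted (extension) function symbols and fresh constants, clauses, flatness/linearity,
instances, locality of theory extensions, (general) uniform interpolants, and a semantic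
specification of the symbol-elimination Algorithm 1 of the paper. -/

open FirstOrder FirstOrder.Language

/-!
Condition (1) is common to both sides, so the content is that minimality of `ψ` among
quantifier-free consequences of `φ` is equivalent to (2').

(2') gives minimality because quantifier-free formulas are reflected along embeddings: a
consequence `θ(ȳ, z̄)` of `φ` holds in the extension `B`, hence already in `A`.

Conversely, given `A ⊨ ψ(ā)`, a model `B` of `T` with `B ⊨ φ(ē, ā)` into which `A` embeds
exists by compactness as soon as each single quantifier-free formula `θ` of the diagram of `A` is
realised together with `φ(ē, ā)` in some model of `T`. If some `θ` were not, then its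
restriction to the finitely many parameters it mentions, together with the equations tying
`ȳ` to `ā`, would be a quantifier-free formula `Θ(ȳ, z̄)` whose negation follows from `φ`;
minimality would give `ψ(ā) → ¬Θ(ā, z̄)` in `A`, contradicting `A ⊨ Θ`.
-/

namespace PaperSE

variable {L : FirstOrder.Language.{0, 0}}

theorem modelsT_iff {M : Type} [S : L.Structure M] {T : L.Theory} : ModelsT M S T ↔ M ⊨ T := by
  rw [Theory.model_iff]
  refine forall₂_congr fun φ _ => ?_
  change Formula.Realize φ (fun e : Empty => e.elim) ↔ Formula.Realize φ default
  rw [Subsingleton.elim (fun e : Empty => e.elim) default]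

theorem realizeF_iff {M : Type} [S : L.Structure M] {α : Type} {φ : L.Formula α} {v : α → M} :
    RealizeF M S φ v ↔ φ.Realize v :=
  Iff.rfl

def SubEmb.toEmbedding {M N : Type} [SM : L.Structure M] [SN : L.Structure N]
    (g : SubEmb L Set.univ M N SM SN) : M ↪[L] N where
  toFun := g.toFun
  inj' := g.inj
  map_fun' f x := g.map_fun _ f trivial x
  map_rel' r x := (g.map_rel _ r x).symm

def SubEmb.ofEmbedding {M N : Type} [SM : L.Structure M] [SN : L.Structure N] (g : M ↪[L] N) :
    SubEmb L Set.univ M N SM SN where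
  toFun := g
  inj := g.injective
  map_fun _ f _ x := g.map_fun f x
  map_rel _ r x := (g.map_rel r x).symm

theorem isQF_iInf {ι α : Type} [Finite ι] {f : ι → L.Formula α} (hf : ∀ i, (f i).IsQF) :
    (Formula.iInf f).IsQF := by
  suffices ∀ l : List (L.Formula α), (∀ θ ∈ l, θ.IsQF) → (l.foldr (· ⊓ ·) ⊤).IsQF from
    this _ (by simpa using hf)
  intro l hl
  induction l with
  | nil => exact .top
  | cons θ l ih => exact (hl θ (by simp)).inf (ih fun θ' h => hl θ' (by simp [h]))

theorem isQF_restrictFreeVar {α β : Type} [DecidableEq α] {n : ℕ} {θ : L.BoundedFormula α n}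
    (hθ : θ.IsQF) (f : θ.freeVarFinset → β) : (θ.restrictFreeVar f).IsQF := by
  induction hθ with
  | falsum => exact .falsum
  | of_isAtomic h =>
    cases h with
    | equal => exact (BoundedFormula.IsAtomic.equal _ _).isQF
    | rel => exact (BoundedFormula.IsAtomic.rel _ _).isQF
  | imp _ _ ih₁ ih₂ => exact (ih₁ _).imp (ih₂ _)

theorem realize_comp_embedding_of_isQF {α M N : Type} [L.Structure M] [L.Structure N]
    {θ : L.Formula α} (hθ : θ.IsQF) (f : M ↪[L] N) (v : α → M) :
    θ.Realize (f ∘ v) ↔ θ.Realize v := by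
  have hxs : (f ∘ default : Fin 0 → N) = default := Subsingleton.elim _ _
  rw [Formula.Realize, Formula.Realize, ← hxs]
  exact hθ.realize_embedding f

theorem exists_embedding_of_realize_isQF {M N : Type} [L.Structure M] [L.Structure N]
    (g : M → N) (h : ∀ θ : L.Formula M, θ.IsQF → θ.Realize id → θ.Realize g) :
    ∃ f : M ↪[L] N, ⇑f = g := by
  have hatom (θ : L.Formula M) (hθ : θ.IsAtomic) : θ.Realize g ↔ θ.Realize id :=
    ⟨fun hg => not_not.1 fun hid => (h θ.not hθ.isQF.not hid) hg, h θ hθ.isQF⟩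
  refine ⟨⟨⟨g, fun x y hxy => ?_⟩, fun {n} f x => ?_, fun {n} r x => ?_⟩, rfl⟩
  · simpa [Formula.realize_equal] using
      (hatom (Term.equal (var x) (var y)) (.equal _ _)).1 (by simpa [Formula.realize_equal])
  · simpa [Formula.realize_equal, Function.comp_def, eq_comm] using
      (hatom (Term.equal (func f (var ∘ x)) (var (Structure.funMap f x))) (.equal _ _)).2
        (by simp [Formula.realize_equal])
  · simpa [Formula.realize_rel, Function.comp_def] using hatom (r.formula (var ∘ x)) (.rel _ _)

theorem exists_model_realize_of_forall_finset {γ ι : Type} (T : L.Theory)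
    (Φ : ι → L.Formula γ)
    (h : ∀ s : Finset ι, ∃ (N : Type) (_ : L.Structure N) (_ : Nonempty N) (_ : N ⊨ T)
      (v : γ → N), ∀ i ∈ s, (Φ i).Realize v) :
    ∃ (N : Type) (_ : L.Structure N) (_ : Nonempty N) (_ : N ⊨ T) (v : γ → N),
      ∀ i, (Φ i).Realize v := by
  classical
  let T' : Option ι → L[[γ]].Theory :=
    fun o => o.elim ((L.lhomWithConstants γ).onTheory T) fun i => {Formula.equivSentence (Φ i)}
  have hsat : Theory.IsSatisfiable (⋃ o, T' o) := by
    refine Theory.isSatisfiable_iUnion_iff_isSatisfiable_iUnion_finset T' |>.2 fun s => ?_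
    obtain ⟨N, _, _, _, v, hv⟩ := h s.eraseNone
    let : (constantsOn γ).Structure N := constantsOn.structure v
    have hN : N ⊨ (L.lhomWithConstants γ).onTheory T :=
      (LHom.onTheory_model _ _).2 inferInstance
    refine @Theory.Model.isSatisfiable _ _ N _ _ ((Theory.model_iff _).2 fun σ hσ => ?_)
    simp only [Set.mem_iUnion] at hσ
    obtain ⟨_ | i, hi, hσ⟩ := hσ
    · exact hN.realize_of_mem σ hσ
    · rw [Set.mem_singleton_iff.1 hσ, Formula.realize_equivSentence]
      exact hv i (Finset.mem_eraseNone.2 hi)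
  obtain ⟨N⟩ := hsat
  let : L.Structure N := (L.lhomWithConstants γ).reduct N
  have : (L.lhomWithConstants γ).IsExpansionOn N := LHom.isExpansionOn_reduct _ _
  have hT' : ∀ o, ∀ σ ∈ T' o, N ⊨ σ := fun o σ hσ =>
    N.is_model.realize_of_mem σ (Set.mem_iUnion.2 ⟨o, hσ⟩)
  refine ⟨N, inferInstance, inferInstance,
    (LHom.onTheory_model (L.lhomWithConstants γ) T).1 ((Theory.model_iff _).2 (hT' none)),
    fun c => (L.con c : N), fun i => ?_⟩
  exact (Formula.realize_equivSentence _ _).1 (hT' (some i) _ rfl)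

theorem exists_embedding_realize_of_forall_isQF {α β : Type} {T : L.Theory}
    {φ : L.Formula (α ⊕ β)} {M : Type} [L.Structure M] (a : β → M)
    (h : ∀ θ : L.Formula M, θ.IsQF → θ.Realize id →
      ∃ (N : Type) (_ : L.Structure N) (_ : Nonempty N) (_ : N ⊨ T) (e : α → N) (w : M → N),
        φ.Realize (Sum.elim e (w ∘ a)) ∧ θ.Realize w) :
    ∃ (N : Type) (_ : L.Structure N) (_ : Nonempty N) (_ : N ⊨ T) (g : M ↪[L] N) (e : α → N),
      φ.Realize (Sum.elim e (g ∘ a)) := by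
  let Φ : Option {θ : L.Formula M // θ.IsQF ∧ θ.Realize id} → L.Formula (M ⊕ α)
    | none => φ.relabel (Sum.elim Sum.inr (Sum.inl ∘ a))
    | some θ => θ.1.relabel Sum.inl
  obtain ⟨N, _, _, _, v, hv⟩ := exists_model_realize_of_forall_finset T Φ fun s => by
    obtain ⟨N, _, _, _, e, w, hφ, hθs⟩ := h (Formula.iInf fun θ : s.eraseNone => θ.1.1)
      (isQF_iInf fun θ => θ.1.2.1) (Formula.realize_iInf.2 fun θ => θ.1.2.2)
    refine ⟨N, inferInstance, inferInstance, inferInstance, Sum.elim w e, ?_⟩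
    rintro (_ | θ) hs
    · rw [Formula.realize_relabel]
      convert hφ using 2
      ext (i | i) <;> rfl
    · simpa [Φ, Formula.realize_relabel] using
        Formula.realize_iInf.1 hθs ⟨θ, Finset.mem_eraseNone.2 hs⟩
  obtain ⟨g, hg⟩ := exists_embedding_of_realize_isQF (v ∘ Sum.inl) fun θ hθ hθM => by
    simpa [Φ, Formula.realize_relabel] using hv (some ⟨θ, hθ, hθM⟩)
  refine ⟨N, inferInstance, inferInstance, inferInstance, g, v ∘ Sum.inr, ?_⟩
  have hφ := hv none
  rw [Formula.realize_relabel] at hφ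
  convert hφ using 2
  ext (i | i) <;> simp [hg]

theorem exists_isQF_separating {α β : Type} [Fintype β] {T : L.Theory}
    {φ : L.Formula (α ⊕ β)} {M : Type} [L.Structure M] (a : β → M) {θ : L.Formula M}
    (hθ : θ.IsQF) (hθM : θ.Realize id)
    (h : ∀ (N : Type) [L.Structure N] [Nonempty N] [N ⊨ T] (e : α → N) (w : M → N),
      φ.Realize (Sum.elim e (w ∘ a)) → ¬ θ.Realize w) :
    ∃ (p : ℕ) (Θ : L.Formula (β ⊕ Fin p)) (z : Fin p → M),
      Θ.IsQF ∧ Θ.Realize (Sum.elim a z) ∧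
      ∀ (N : Type) [L.Structure N] [Nonempty N] [N ⊨ T] (e : α → N) (y : β → N)
        (z : Fin p → N), φ.Realize (Sum.elim e y) → ¬ Θ.Realize (Sum.elim y z) := by
  classical
  -- `Θ(ȳ, z̄)`: `θ` on its parameters and those of `ā`, enumerated by `z̄`, and `yᵢ = z_{aᵢ}`.
  let s : Finset M := θ.freeVarFinset ∪ Finset.univ.image a
  let enum (j : Fin s.card) : M := s.equivFin.symm j
  have enum_injective : enum.Injective := Subtype.val_injective.comp s.equivFin.symm.injective
  let idx (x : M) (hx : x ∈ s) : Fin s.card := s.equivFin ⟨x, hx⟩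
  have enum_idx (x : M) (hx : x ∈ s) : enum (idx x hx) = x := by simp [enum, idx]
  let θ' : L.Formula (Fin s.card) :=
    θ.restrictFreeVar fun x => idx x (Finset.mem_union_left _ x.2)
  let ia (i : β) : Fin s.card := idx (a i) (Finset.mem_union_right _ (by simp))
  let Θ : L.Formula (β ⊕ Fin s.card) :=
    θ'.relabel Sum.inr ⊓ Formula.iInf fun i => Term.equal (var (Sum.inl i)) (var (Sum.inr (ia i)))
  refine ⟨s.card, Θ, enum, ?_, ?_, fun N _ _ _ e y z hφ hΘ => ?_⟩
  · exact ((isQF_restrictFreeVar hθ _).relabel _).inf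
      (isQF_iInf fun i => (BoundedFormula.IsAtomic.equal _ _).isQF)
  · refine Formula.realize_inf.2 ⟨?_, Formula.realize_iInf.2 fun i => ?_⟩
    · rw [Formula.realize_relabel]
      exact (BoundedFormula.realize_restrictFreeVar id fun x => enum_idx _ _).2 hθM
    · simp [Formula.realize_equal, ia, enum_idx]
  · obtain ⟨hθ', hya⟩ := Formula.realize_inf.1 hΘ
    let w : M → N := Function.extend enum z fun _ => Classical.arbitrary N
    have hw (j : Fin s.card) : w (enum j) = z j := enum_injective.extend_apply _ _ _
    refine h N e w ?_ ?_
    · convert hφ using 3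
      ext i
      have hyi : y i = z (ia i) := by
        simpa [Formula.realize_equal] using Formula.realize_iInf.1 hya i
      simp [hyi, ← hw, ia, enum_idx]
    · rw [Formula.realize_relabel] at hθ'
      exact (BoundedFormula.realize_restrictFreeVar w fun x => by
        simp only [Function.comp_apply, Sum.elim_inr, ← hw, enum_idx]).1 hθ'

theorem exists_embedding_realize_of_cover {α β : Type} [Fintype β] {T : L.Theory}
    {φ : L.Formula (α ⊕ β)} {ψ : L.Formula β}
    (hcover : ∀ (p : ℕ) (Θ : L.Formula (β ⊕ Fin p)), Θ.IsQF →
      (∀ (N : Type) [L.Structure N] [Nonempty N] [N ⊨ T] (e : α → N) (y : β → N)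
        (z : Fin p → N), φ.Realize (Sum.elim e y) → Θ.Realize (Sum.elim y z)) →
      ∀ (N : Type) [L.Structure N] [Nonempty N] [N ⊨ T] (y : β → N) (z : Fin p → N),
        ψ.Realize y → Θ.Realize (Sum.elim y z))
    {M : Type} [L.Structure M] [Nonempty M] [M ⊨ T] (a : β → M) (ha : ψ.Realize a) :
    ∃ (N : Type) (_ : L.Structure N) (_ : Nonempty N) (_ : N ⊨ T) (g : M ↪[L] N) (e : α → N),
      φ.Realize (Sum.elim e (g ∘ a)) := by
  refine exists_embedding_realize_of_forall_isQF a fun θ hθ hθM => ?_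
  by_contra hne
  obtain ⟨p, Θ, z, hΘ, hΘM, hsep⟩ := exists_isQF_separating (T := T) a hθ hθM
    fun N _ _ _ e w hφ hθw => hne ⟨N, inferInstance, inferInstance, inferInstance, e, w, hφ, hθw⟩
  exact hcover p Θ.not hΘ.not (fun N _ _ _ => hsep N) M a z ha hΘM

theorem cover_semantic_characterization_general
    (L : FirstOrder.Language.{0, 0}) (T : L.Theory)
    (m k : ℕ) (φ : L.Formula (Fin m ⊕ Fin k)) (ψ : L.Formula (Fin k)) :
    -- `ψ` is a `T`-cover of `∃ē φ(ē, ȳ)` :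
    ((∀ (M : Type) (S : L.Structure M), Nonempty M → ModelsT M S T →
        ∀ (e : Fin m → M) (y : Fin k → M),
          RealizeF M S φ (Sum.elim e y) → RealizeF M S ψ y) ∧
     (∀ (p : ℕ) (θ : L.Formula (Fin k ⊕ Fin p)), θ.IsQF →
        (∀ (M : Type) (S : L.Structure M), Nonempty M → ModelsT M S T →
          ∀ (e : Fin m → M) (y : Fin k → M) (z : Fin p → M),
            RealizeF M S φ (Sum.elim e y) → RealizeF M S θ (Sum.elim y z)) →
        (∀ (M : Type) (S : L.Structure M), Nonempty M → ModelsT M S T →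
          ∀ (y : Fin k → M) (z : Fin p → M),
            RealizeF M S ψ y → RealizeF M S θ (Sum.elim y z))))
    ↔
    -- conditions (1) and (2') :
    ((∀ (M : Type) (S : L.Structure M), Nonempty M → ModelsT M S T →
        ∀ (e : Fin m → M) (y : Fin k → M),
          RealizeF M S φ (Sum.elim e y) → RealizeF M S ψ y) ∧
     (∀ (M : Type) (S : L.Structure M), Nonempty M → ModelsT M S T →
        ∀ a : Fin k → M, RealizeF M S ψ a →
          ∃ (N : Type) (_ : Nonempty N) (SN : L.Structure N)
            (g : SubEmb L Set.univ M N S SN),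
            ModelsT N SN T ∧ ∃ e : Fin m → N, RealizeF N SN φ (Sum.elim e (g.toFun ∘ a)))) := by
  refine and_congr_right fun _ =>
    ⟨fun hcover M S _ hM a ha => ?_, fun hext p θ hθ hφθ M S _ hM y z hψ => ?_⟩
  · have := modelsT_iff.1 hM
    obtain ⟨N, SN, _, hN, g, e, he⟩ := exists_embedding_realize_of_cover (φ := φ)
      (fun p Θ hΘ hφΘ N SN _ hN => hcover p Θ hΘ
        (fun N' SN' _ hN' => @hφΘ N' SN' _ (modelsT_iff.1 hN')) N SN ‹_› (modelsT_iff.2 hN))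
      a ha
    exact ⟨N, inferInstance, SN, .ofEmbedding g, modelsT_iff.2 hN, e, he⟩
  · obtain ⟨N, _, SN, g, hN, e, he⟩ := hext M S ‹_› hM y hψ
    have hθN := hφθ N SN ‹_› hN e _ (g.toFun ∘ z) he
    rw [realizeF_iff, ← Sum.comp_elim] at hθN
    exact (realize_comp_embedding_of_isQF hθ g.toEmbedding _).1 hθN

/-- Semantic characterization of `T`-covers (uniform interpolants):
a quantifier-free formula `ψ(ȳ)` is a `T`-cover of `∃ē φ(ē, ȳ)` iff
(1) `T ⊨ φ(ē, ȳ) → ψ(ȳ)` and (2') every model `A` of `T` with `A ⊨ ψ(ā)` embeds into a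
model `B` of `T` with `B ⊨ ∃ē φ(ē, ā)`.  (Embeddings are `SubEmb` w.r.t. all symbols.) -/
theorem cover_semantic_characterization
    (L : FirstOrder.Language.{0, 0}) (T : L.Theory)
    (m k : ℕ) (φ : L.Formula (Fin m ⊕ Fin k)) (ψ : L.Formula (Fin k)) (hψ : ψ.IsQF) :
    -- `ψ` is a `T`-cover of `∃ē φ(ē, ȳ)` :
    ((∀ (M : Type) (S : L.Structure M), Nonempty M → ModelsT M S T →
        ∀ (e : Fin m → M) (y : Fin k → M),
          RealizeF M S φ (Sum.elim e y) → RealizeF M S ψ y) ∧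
     (∀ (p : ℕ) (θ : L.Formula (Fin k ⊕ Fin p)), θ.IsQF →
        (∀ (M : Type) (S : L.Structure M), Nonempty M → ModelsT M S T →
          ∀ (e : Fin m → M) (y : Fin k → M) (z : Fin p → M),
            RealizeF M S φ (Sum.elim e y) → RealizeF M S θ (Sum.elim y z)) →
        (∀ (M : Type) (S : L.Structure M), Nonempty M → ModelsT M S T →
          ∀ (y : Fin k → M) (z : Fin p → M),
            RealizeF M S ψ y → RealizeF M S θ (Sum.elim y z))))
    ↔
    -- conditions (1) and (2') :
    ((∀ (M : Type) (S : L.Structure M), Nonempty M → ModelsT M S T →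
        ∀ (e : Fin m → M) (y : Fin k → M),
          RealizeF M S φ (Sum.elim e y) → RealizeF M S ψ y) ∧
     (∀ (M : Type) (S : L.Structure M), Nonempty M → ModelsT M S T →
        ∀ a : Fin k → M, RealizeF M S ψ a →
          ∃ (N : Type) (_ : Nonempty N) (SN : L.Structure N)
            (g : SubEmb L Set.univ M N S SN),
            ModelsT N SN T ∧ ∃ e : Fin m → N, RealizeF N SN φ (Sum.elim e (g.toFun ∘ a)))) :=
  cover_semantic_characterization_general L T m k φ ψ

end PaperSE
end
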